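/- arXiv:1706.01260 — 6 statements merged into one kernel-verified Lean document; each statement's English description precedes it below -/
import Mathlib

section
/- Glynn's formula for the permanent: for any n×n complex matrix M = (m_{ij}) with n ≥ 1, Per M = 2^{-(n-1)} · ∑_{δ} (∏_{k=1}^n δ_k) · ∏_{j=1}^n (∑_{i=1}^n δ_i m_{ij}), where the outer sum ranges over all δ ∈ {−1,1}^n with δ_1 = 1. -/
/-!
Expanding the product of linear forms gives
`∏ⱼ ∑ᵢ δᵢ mᵢⱼ = ∑_{f : [n] → [n]} ∏ⱼ δ_{f j} m_{f j, j}`. Averaged over all `δ ∈ {±1}ⁿ`, the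
coefficient `∏ₖ δₖ ∏ⱼ δ_{f j} = ∏ₖ δₖ ^ (1 + |f⁻¹ k|)` vanishes unless every fibre of `f` has odd,
hence positive, size, i.e. unless `f` is a permutation; so the unrestricted sum is `2ⁿ Per M`.
The summand is invariant under `δ ↦ -δ`, so fixing `δ₁ = 1` halves the sum.
-/

noncomputable def perm {n : ℕ} (M : Matrix (Fin n) (Fin n) ℂ) : ℂ :=
  ∑ σ : Equiv.Perm (Fin n), ∏ i, M i (σ i)

open Finset Function

section Glynn

variable {R ι : Type*} [CommRing R] [Fintype ι]

def boolSign (b : Bool) : R := if b then 1 else -1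

@[simp]
lemma boolSign_not (b : Bool) : (boolSign (!b) : R) = -boolSign b := by
  cases b <;> simp [boolSign]

lemma sum_boolSign_pow (m : ℕ) : ∑ b : Bool, (boolSign b : R) ^ m = if Even m then 2 else 0 := by
  rcases Nat.even_or_odd m with hm | hm
  · simp [boolSign, hm.neg_one_pow, hm, one_add_one_eq_two]
  · simp [boolSign, hm.neg_one_pow, Nat.not_even_iff_odd.mpr hm]

lemma Fintype.prod_comp_eq_prod_pow_card_fiber {M κ : Type*} [CommMonoid M]
    [Fintype κ] [DecidableEq κ] (g : κ → M) (f : ι → κ) :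
    ∏ i, g (f i) = ∏ k, g k ^ #{i | f i = k} := by
  rw [← Finset.prod_fiberwise' univ f g]
  simp_rw [prod_const]

lemma odd_card_fiber_iff_bijective [DecidableEq ι] (f : ι → ι) :
    (∀ k, Odd #{j | f j = k}) ↔ Bijective f := by
  refine ⟨fun hodd => Finite.surjective_iff_bijective.mp fun k => ?_, fun hf k => ?_⟩
  · obtain ⟨j, hj⟩ := card_pos.mp (hodd k).pos
    exact ⟨j, (mem_filter.mp hj).2⟩
  · obtain ⟨j, rfl⟩ := hf.surjective k
    rw [show ({i | f i = f j} : Finset ι) = {j} by ext i; simp [hf.injective.eq_iff]]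
    exact odd_one

lemma sum_prod_boolSign_pow [DecidableEq ι] (c : ι → ℕ) :
    ∑ d : ι → Bool, ∏ k, (boolSign (d k) : R) ^ c k = ∏ k, if Even (c k) then 2 else 0 := by
  simp_rw [← sum_boolSign_pow]
  exact (Fintype.prod_sum fun k b => (boolSign b : R) ^ c k).symm

lemma sum_boolSign_mul_prod_boolSign_comp [DecidableEq ι] (f : ι → ι) :
    ∑ d : ι → Bool, (∏ k, (boolSign (d k) : R)) * ∏ j, boolSign (d (f j)) =
      if Bijective f then 2 ^ Fintype.card ι else 0 := by
  have hterm : ∀ d : ι → Bool, (∏ k, (boolSign (d k) : R)) * ∏ j, boolSign (d (f j)) =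
      ∏ k, boolSign (d k) ^ (#{j | f j = k} + 1) := fun d => by
    rw [Fintype.prod_comp_eq_prod_pow_card_fiber (fun k => (boolSign (d k) : R)) f,
      ← prod_mul_distrib]
    simp_rw [pow_succ']
  simp_rw [hterm, sum_prod_boolSign_pow, Fintype.prod_ite_zero, Nat.even_add_one,
    Nat.not_even_iff_odd, odd_card_fiber_iff_bijective, prod_const, card_univ]

lemma Fintype.sum_perm_eq_sum_ite_bijective {M : Type*} [AddCommMonoid M] [DecidableEq ι]
    (g : (ι → ι) → M) :
    ∑ σ : Equiv.Perm ι, g σ = ∑ f : ι → ι, if Bijective f then g f else 0 :=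
  Fintype.sum_of_injective (⇑) DFunLike.coe_injective _ _
    (fun f hf => if_neg fun hb => hf ⟨Equiv.ofBijective f hb, rfl⟩)
    (fun σ => (if_pos σ.bijective).symm)

def glynnTerm (M : Matrix ι ι R) (d : ι → Bool) : R :=
  (∏ k, boolSign (d k)) * ∏ j, ∑ i, boolSign (d i) * M i j

lemma glynnTerm_comp_not (M : Matrix ι ι R) (d : ι → Bool) :
    glynnTerm M (fun i => !d i) = glynnTerm M d := by
  simp only [glynnTerm, boolSign_not, neg_mul, sum_neg_distrib, prod_neg]
  rw [mul_mul_mul_comm, ← pow_add, Even.neg_one_pow ⟨_, rfl⟩, one_mul]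

lemma sum_glynnTerm [DecidableEq ι] (M : Matrix ι ι R) :
    ∑ d, glynnTerm M d = 2 ^ Fintype.card ι * M.permanent := by
  have hexpand : ∀ d, glynnTerm M d =
      ∑ f : ι → ι, ((∏ k, boolSign (d k)) * ∏ j, boolSign (d (f j))) * ∏ j, M (f j) j := by
    intro d
    simp_rw [glynnTerm, Fintype.prod_sum, mul_sum, prod_mul_distrib, mul_assoc]
  simp_rw [hexpand]
  rw [sum_comm]
  simp_rw [← sum_mul, sum_boolSign_mul_prod_boolSign_comp, ite_mul, zero_mul]
  rw [Matrix.permanent, mul_sum]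
  exact (Fintype.sum_perm_eq_sum_ite_bijective fun f => 2 ^ Fintype.card ι * ∏ j, M (f j) j).symm

lemma sum_eq_two_mul_sum_filter_of_comp_not [DecidableEq ι] (i₀ : ι) (F : (ι → Bool) → R)
    (hF : ∀ d, F (fun i => !d i) = F d) :
    ∑ d, F d = 2 * ∑ d with d i₀ = true, F d := by
  rw [← sum_filter_add_sum_filter_not univ (fun d : ι → Bool => d i₀ = true), two_mul]
  congr 1
  refine sum_nbij' (fun d i => !d i) (fun d i => !d i) ?_ ?_ ?_ ?_ ?_ <;> simp [hF]

end Glynn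

/-- Glynn's formula for the permanent: the sum ranges over all sign vectors
`δ ∈ {-1,1}^n` with first coordinate `+1`, encoded by Boolean vectors `d` with
`d 0 = true` via `δ i = if d i then 1 else -1`. -/
theorem glynn_formula {n : ℕ} (hn : 1 ≤ n) (M : Matrix (Fin n) (Fin n) ℂ) :
    perm M = (2 ^ (n - 1) : ℂ)⁻¹ *
      ∑ d ∈ Finset.univ.filter (fun d : Fin n → Bool => d ⟨0, hn⟩ = true),
        (∏ k : Fin n, (if d k then (1 : ℂ) else -1)) *
          ∏ j : Fin n, ∑ i : Fin n, (if d i then (1 : ℂ) else -1) * M i j := by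
  have hperm : perm M = M.permanent := Matrix.permanent_transpose M
  have hsum := sum_glynnTerm M
  rw [sum_eq_two_mul_sum_filter_of_comp_not ⟨0, hn⟩ _ (glynnTerm_comp_not M), Fintype.card_fin,
    ← mul_pow_sub_one (by omega : n ≠ 0), mul_assoc] at hsum
  rw [hperm, eq_inv_mul_iff_mul_eq₀ (pow_ne_zero _ two_ne_zero)]
  exact (mul_left_cancel₀ two_ne_zero hsum).symm
end

section
/- Let A be an m×n complex matrix whose columns are orthonormal (i.e., A*A = I_n, which requires m ≥ n). For r ∈ [m]^n let A_r denote the n×n matrix whose i-th row is row r_i of A. Then the function p(r) = (1/n!) · |Per A_r|^2 is a probability mass function on [m]^n, i.e., ∑_{r ∈ [m]^n} (1/n!)|Per A_r|^2 = 1. -/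
/-!
Expanding both permanents, `∑_r Per(A_r) · conj Per(B_r)` becomes a sum over pairs of permutations
`σ, τ` of `∏_i ∑_k A_{k,σ i} conj B_{k,τ i} = ∏_i (B^* A)_{τ i, σ i}`, and summing over `σ` for fixed
`τ` gives `Per(B^* A)`. Hence `∑_r Per(A_r) · conj Per(B_r) = n! · Per(B^* A)`, a permanent analogue
of the Cauchy–Binet formula; for `B = A` with orthonormal columns the right-hand side is `n!`.
-/

open Matrix
open ComplexConjugate

theorem perm_one {n : ℕ} : perm (1 : Matrix (Fin n) (Fin n) ℂ) = 1 := by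
  rw [perm, Finset.sum_eq_single (1 : Equiv.Perm (Fin n))]
  · exact Finset.prod_eq_one fun i _ => one_apply_eq i
  · intro σ _ hσ
    obtain ⟨i, hi⟩ : ∃ i, σ i ≠ i := by
      by_contra! h
      exact hσ (Equiv.ext h)
    exact Finset.prod_eq_zero (Finset.mem_univ i) (one_apply_ne' hi)
  · simp

theorem sum_prod_apply_perm_eq_perm {n : ℕ} (M : Matrix (Fin n) (Fin n) ℂ)
    (τ : Equiv.Perm (Fin n)) : ∑ σ : Equiv.Perm (Fin n), ∏ i, M (τ i) (σ i) = perm M := by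
  have reindex (σ : Equiv.Perm (Fin n)) :
      ∏ i, M (τ i) (σ i) = ∏ j, M j ((σ * τ⁻¹) j) := by
    rw [← Equiv.prod_comp τ fun j => M j ((σ * τ⁻¹) j)]
    simp
  simp_rw [reindex]
  exact Equiv.sum_comp (Equiv.mulRight τ⁻¹) fun σ => ∏ j, M j (σ j)

theorem perm_mul_conj_perm {n : ℕ} (M N : Matrix (Fin n) (Fin n) ℂ) :
    perm M * conj (perm N) =
      ∑ σ : Equiv.Perm (Fin n), ∑ τ : Equiv.Perm (Fin n), ∏ i, M i (σ i) * conj (N i (τ i)) := by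
  simp only [perm, map_sum, map_prod, Finset.sum_mul_sum, Finset.prod_mul_distrib]

theorem sum_prod_submatrix_mul_conj {ι : Type*} [Fintype ι] {n : ℕ}
    (A B : Matrix ι (Fin n) ℂ) (σ τ : Equiv.Perm (Fin n)) :
    ∑ r : Fin n → ι, ∏ i, A (r i) (σ i) * conj (B (r i) (τ i)) =
      ∏ i, (Bᴴ * A) (τ i) (σ i) := by
  rw [← Fintype.prod_sum fun i k => A k (σ i) * conj (B k (τ i))]
  simp only [mul_apply, conjTranspose_apply, Complex.star_def, mul_comm]

theorem sum_perm_submatrix_mul_conj {ι : Type*} [Fintype ι] {n : ℕ}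
    (A B : Matrix ι (Fin n) ℂ) :
    ∑ r : Fin n → ι, perm (A.submatrix r id) * conj (perm (B.submatrix r id)) =
      n.factorial * perm (Bᴴ * A) :=
  calc ∑ r : Fin n → ι, perm (A.submatrix r id) * conj (perm (B.submatrix r id))
      = ∑ σ : Equiv.Perm (Fin n), ∑ τ : Equiv.Perm (Fin n), ∑ r : Fin n → ι,
          ∏ i, A (r i) (σ i) * conj (B (r i) (τ i)) := by
        simp_rw [perm_mul_conj_perm, submatrix_apply, id]
        rw [Finset.sum_comm]
        simp_rw [Finset.sum_comm (γ := Fin n → ι)]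
    _ = ∑ τ : Equiv.Perm (Fin n), ∑ σ : Equiv.Perm (Fin n), ∏ i, (Bᴴ * A) (τ i) (σ i) := by
        simp_rw [sum_prod_submatrix_mul_conj]
        exact Finset.sum_comm
    _ = n.factorial * perm (Bᴴ * A) := by
        simp [sum_prod_apply_perm_eq_perm, Fintype.card_perm]

theorem sum_norm_perm_submatrix_sq {ι : Type*} [Fintype ι] {n : ℕ} (A : Matrix ι (Fin n) ℂ)
    (hA : Aᴴ * A = 1) :
    ∑ r : Fin n → ι, ‖perm (A.submatrix r id)‖ ^ 2 = n.factorial := by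
  have h := sum_perm_submatrix_mul_conj A A
  simp only [Complex.mul_conj', hA, perm_one, mul_one] at h
  exact_mod_cast h

/-- For an `m × n` complex matrix with orthonormal columns, the function
`p(r) = (1/n!) |Per A_r|^2` is a probability mass function on `[m]^n`. -/
theorem bosonSampling_pmf {m n : ℕ} (A : Matrix (Fin m) (Fin n) ℂ)
    (hA : Aᴴ * A = 1) :
    ∑ r : Fin n → Fin m,
      (1 / (n.factorial : ℝ)) * ‖perm (Matrix.of fun i j => A (r i) j)‖ ^ 2
      = 1 := by
  have hsum : ∑ r : Fin n → Fin m, ‖perm (Matrix.of fun i j => A (r i) j)‖ ^ 2 = n.factorial :=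
    sum_norm_perm_submatrix_sq A hA
  rw [← Finset.mul_sum, hsum, one_div, inv_mul_cancel₀ (by positivity)]
end

section
/- Let A be an m×n complex matrix with orthonormal columns (A*A = I_n), and for r ∈ [m]^n let A_r be the n×n matrix whose i-th row is row r_i of A. For 1 ≤ k ≤ n, the marginal of the pmf p(r) = (1/n!)|Per A_r|^2 on the first k coordinates is p(r_1,…,r_k) = ((n−k)!/n!) · ∑_{c ∈ C_k} |Per A^c_{r_1,…,r_k}|^2, where C_k is the set of k-element subsets of [n] and A^c_{r_1,…,r_k} is the k×k matrix formed from rows r_1,…,r_k and columns c of A. -/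
/-!
Expanding the permanent along the first `k` rows gives
`Per A_{(r,t)} = ∑_c Per A^c_r · Per A^{cᶜ}_t`, the sum running over the `k`-subsets `c` of the
columns. Summing `|Per A_{(r,t)}|²` over the tail `t` leaves the cross terms
`∑_t Per A^{cᶜ}_t · conj (Per A^{c'ᶜ}_t) = ∑_{σ,τ} ∏_j ⟨a_{cᶜ(σ j)}, a_{c'ᶜ(τ j)}⟩`, and by
orthonormality of the columns `a_i` this counts the pairs of permutations with
`cᶜ ∘ σ = c'ᶜ ∘ τ`: there are `l!` of them if `c = c'` and none otherwise.
-/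

open Matrix

open Finset Equiv Nat

theorem Matrix.sum_prod_mul_star_eq_ite {R ι κ J : Type*} [CommSemiring R] [StarRing R]
    [Fintype ι] [Fintype J] [DecidableEq J] [DecidableEq κ] (A : Matrix ι κ R) (hA : Aᴴ * A = 1)
    (a b : J → κ) :
    ∑ t : J → ι, ∏ j, A (t j) (a j) * star (A (t j) (b j)) = if a = b then 1 else 0 := by
  have hcol (x y : κ) : ∑ i, A i x * star (A i y) = if x = y then 1 else 0 := by
    simpa [Matrix.mul_apply, Matrix.one_apply, mul_comm, eq_comm] using congrFun₂ hA y x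
  rw [← Fintype.prod_sum fun j i => A i (a j) * star (A i (b j))]
  simp only [hcol, Fintype.prod_boole, funext_iff]

section

variable {k l : ℕ}

abbrev Subsets (k l : ℕ) := {c : Finset (Fin (k + l)) // c ∈ powersetCard k univ}

namespace Subsets

abbrev headEmb (c : Subsets k l) : Fin k ↪o Fin (k + l) :=
  c.1.orderEmbOfFin (mem_powersetCard.mp c.2).2

lemma card_compl (c : Subsets k l) : #c.1ᶜ = l := by
  rw [Finset.card_compl, (mem_powersetCard.mp c.2).2, Fintype.card_fin, Nat.add_sub_cancel_left]

abbrev tailEmb (c : Subsets k l) : Fin l ↪o Fin (k + l) :=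
  c.1ᶜ.orderEmbOfFin c.card_compl

lemma tailEmb_injective : Function.Injective (tailEmb (k := k) (l := l)) := by
  intro c c' h
  have := congrArg (fun e : Fin l ↪o Fin (k + l) => Set.range e) h
  simp only [range_orderEmbOfFin, coe_inj, compl_inj_iff] at this
  exact Subtype.ext this

end Subsets

open Subsets

/-- The permutation sending `Fin k` onto `c` and the rest onto `cᶜ`, each in the order prescribed
by the two permutations. Every permutation arises this way exactly once. -/
def splitPerm (x : Subsets k l × Perm (Fin k) × Perm (Fin l)) : Perm (Fin (k + l)) :=
  (finSumFinEquiv.symm.trans (sumCongr x.2.1 x.2.2)).trans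
    (finSumEquivOfFinset (mem_powersetCard.mp x.1.2).2 x.1.card_compl)

@[simp] lemma splitPerm_castAdd (x : Subsets k l × Perm (Fin k) × Perm (Fin l)) (i : Fin k) :
    splitPerm x (Fin.castAdd l i) = x.1.headEmb (x.2.1 i) := by
  simp [splitPerm]

@[simp] lemma splitPerm_natAdd (x : Subsets k l × Perm (Fin k) × Perm (Fin l)) (j : Fin l) :
    splitPerm x (Fin.natAdd k j) = x.1.tailEmb (x.2.2 j) := by
  simp [splitPerm]

lemma range_splitPerm_castAdd (x : Subsets k l × Perm (Fin k) × Perm (Fin l)) :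
    Set.range (fun i => splitPerm x (Fin.castAdd l i)) = x.1.1 := by
  simp only [splitPerm_castAdd]
  exact (EquivLike.range_comp _ x.2.1).trans (range_orderEmbOfFin _ _)

lemma splitPerm_injective : Function.Injective (splitPerm (k := k) (l := l)) := by
  rintro ⟨c, ρ, w⟩ ⟨c', ρ', w'⟩ h
  obtain rfl : c = c' := Subtype.ext <| coe_inj.mp <| by
    rw [← range_splitPerm_castAdd (c, ρ, w), ← range_splitPerm_castAdd (c', ρ', w'), h]
  have hρ : ρ = ρ' := Equiv.ext fun i => by
    simpa using DFunLike.congr_fun h (Fin.castAdd l i)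
  have hw : w = w' := Equiv.ext fun j => by
    simpa using DFunLike.congr_fun h (Fin.natAdd k j)
  rw [hρ, hw]

lemma card_subsets_prod_perm :
    Fintype.card (Subsets k l × Perm (Fin k) × Perm (Fin l)) = (k + l)! := by
  simpa [Fintype.card_perm, card_powersetCard, ← mul_assoc] using
    choose_mul_factorial_mul_factorial (le_add_right k l)

noncomputable def splitPermEquiv :
    Subsets k l × Perm (Fin k) × Perm (Fin l) ≃ Perm (Fin (k + l)) :=
  Equiv.ofBijective splitPerm <| (Fintype.bijective_iff_injective_and_card _).mpr
    ⟨splitPerm_injective, by rw [card_subsets_prod_perm, Fintype.card_perm, Fintype.card_fin]⟩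

theorem perm_eq_sum_perm_head_mul_perm_tail (M : Matrix (Fin (k + l)) (Fin (k + l)) ℂ) :
    perm M = ∑ c : Subsets k l,
      perm (M.submatrix (Fin.castAdd l) c.headEmb) *
        perm (M.submatrix (Fin.natAdd k) c.tailEmb) := by
  rw [perm, ← splitPermEquiv.sum_comp, Fintype.sum_prod_type]
  refine sum_congr rfl fun c _ => ?_
  rw [perm, perm, sum_mul_sum, Fintype.sum_prod_type]
  simp [splitPermEquiv, Fin.prod_univ_add]

theorem sum_perm_submatrix_mul_star_perm_submatrix {m n : ℕ} (A : Matrix (Fin m) (Fin n) ℂ)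
    (hA : Aᴴ * A = 1) (e e' : Fin l ↪o Fin n) :
    ∑ t : Fin l → Fin m, perm (A.submatrix t e) * star (perm (A.submatrix t e'))
      = if e = e' then (l ! : ℂ) else 0 := by
  have hexpand : ∑ t : Fin l → Fin m, perm (A.submatrix t e) * star (perm (A.submatrix t e'))
      = ∑ σ : Perm (Fin l), ∑ τ : Perm (Fin l),
          if (fun j => e (σ j)) = (fun j => e' (τ j)) then 1 else 0 := by
    simp only [perm, submatrix_apply, star_sum, star_prod, sum_mul_sum, ← prod_mul_distrib]
    rw [sum_comm]
    refine sum_congr rfl fun σ _ => ?_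
    rw [sum_comm]
    exact sum_congr rfl fun τ _ => A.sum_prod_mul_star_eq_ite hA _ _
  rw [hexpand]
  split_ifs with he
  · subst he
    simp [funext_iff, ← Perm.ext_iff, Fintype.card_perm]
  · refine sum_eq_zero fun σ _ => sum_eq_zero fun τ _ => if_neg fun h => he ?_
    rw [← OrderEmbedding.range_inj, ← EquivLike.range_comp e σ, ← EquivLike.range_comp e' τ]
    exact congrArg Set.range h

theorem sum_norm_sq_perm_append {m : ℕ} (A : Matrix (Fin m) (Fin (k + l)) ℂ) (hA : Aᴴ * A = 1)
    (r : Fin k → Fin m) :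
    ∑ t : Fin l → Fin m, ‖perm (A.submatrix (Fin.append r t) id)‖ ^ 2
      = l ! * ∑ c : Subsets k l, ‖perm (A.submatrix r c.headEmb)‖ ^ 2 := by
  have hlaplace (t : Fin l → Fin m) : perm (A.submatrix (Fin.append r t) id)
      = ∑ c : Subsets k l, perm (A.submatrix r c.headEmb) * perm (A.submatrix t c.tailEmb) := by
    rw [perm_eq_sum_perm_head_mul_perm_tail]
    simp only [submatrix_submatrix, Function.comp_def, Fin.append_left, Fin.append_right, id_eq]
  apply Complex.ofReal_injective
  push_cast
  simp only [← Complex.mul_conj', ← Complex.star_def]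
  calc ∑ t : Fin l → Fin m,
        perm (A.submatrix (Fin.append r t) id) * star (perm (A.submatrix (Fin.append r t) id))
      = ∑ c : Subsets k l, ∑ c' : Subsets k l,
          perm (A.submatrix r c.headEmb) * star (perm (A.submatrix r c'.headEmb)) *
            ∑ t : Fin l → Fin m,
              perm (A.submatrix t c.tailEmb) * star (perm (A.submatrix t c'.tailEmb)) := by
        simp only [hlaplace, star_sum, star_mul', sum_mul_sum]
        rw [sum_comm]
        refine sum_congr rfl fun c _ => ?_
        rw [sum_comm]
        refine sum_congr rfl fun c' _ => ?_
        rw [mul_sum]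
        exact sum_congr rfl fun t _ => by ring
    _ = l ! * ∑ c : Subsets k l,
          perm (A.submatrix r c.headEmb) * star (perm (A.submatrix r c.headEmb)) := by
        simp_rw [sum_perm_submatrix_mul_star_perm_submatrix A hA, tailEmb_injective.eq_iff, mul_ite,
          mul_zero, sum_ite_eq, if_pos (mem_univ _), mul_sum]
        exact sum_congr rfl fun c _ => mul_comm _ _

end

theorem bosonSampling_marginal_general {m k l : ℕ}
    (A : Matrix (Fin m) (Fin (k + l)) ℂ) (hA : Aᴴ * A = 1)
    (r : Fin k → Fin m) :
    ∑ t : Fin l → Fin m,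
      (1 / ((k + l).factorial : ℝ)) *
        ‖perm (Matrix.of fun i j => A (Fin.append r t i) j)‖ ^ 2
    = ((l.factorial : ℝ) / ((k + l).factorial : ℝ)) *
      ∑ c ∈ (Finset.powersetCard k (Finset.univ : Finset (Fin (k + l)))).attach,
        ‖perm (Matrix.of fun i j =>
          A (r i) (c.1.orderEmbOfFin ((Finset.mem_powersetCard.mp c.2).2) j))‖ ^ 2 := by
  calc _ = 1 / ((k + l)! : ℝ) *
        ∑ t : Fin l → Fin m, ‖perm (A.submatrix (Fin.append r t) id)‖ ^ 2 := (mul_sum ..).symm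
    _ = _ := by
      rw [sum_norm_sq_perm_append A hA r, ← univ_eq_attach, ← mul_assoc, one_div_mul_eq_div]
      rfl

/-- Marginal of the Boson Sampling pmf on the first `k` coordinates (writing
`n = k + l`): summing `p(r) = (1/n!)|Per A_r|^2` over the last `l` coordinates
gives `((n-k)!/n!) ∑_{c ∈ C_k} |Per A^c_{r_1,…,r_k}|^2`, where `C_k` is the set
of `k`-element subsets of the `n` columns. -/
theorem bosonSampling_marginal {m k l : ℕ} (hk : 1 ≤ k)
    (A : Matrix (Fin m) (Fin (k + l)) ℂ) (hA : Aᴴ * A = 1)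
    (r : Fin k → Fin m) :
    ∑ t : Fin l → Fin m,
      (1 / ((k + l).factorial : ℝ)) *
        ‖perm (Matrix.of fun i j => A (Fin.append r t i) j)‖ ^ 2
    = ((l.factorial : ℝ) / ((k + l).factorial : ℝ)) *
      ∑ c ∈ (Finset.powersetCard k (Finset.univ : Finset (Fin (k + l)))).attach,
        ‖perm (Matrix.of fun i j =>
          A (r i) (c.1.orderEmbOfFin ((Finset.mem_powersetCard.mp c.2).2) j))‖ ^ 2 :=
  bosonSampling_marginal_general A hA r
end

section
/- Let A be an m×n complex matrix with orthonormal columns (A*A = I_n). For a single coordinate, the marginal of the pmf p(r) = (1/n!)|Per A_r|^2 satisfies p(r_1) = (1/n) · ∑_{k=1}^{n} |a_{r_1,k}|^2 for each r_1 ∈ [m], i.e., ∑_{r_2,…,r_n ∈ [m]} (1/n!)|Per A_{(r_1,…,r_n)}|^2 = (1/n)∑_{k=1}^n |a_{r_1,k}|^2. -/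
/-!
Expanding `|Per A_r|² = ∑_{σ,τ} ∏ᵢ a_{rᵢ,σ(i)} conj(a_{rᵢ,τ(i)})` and summing over the free rows
`r₂, …, rₙ` independently, each factor `i ≥ 2` becomes `∑_r a_{r,σ(i)} conj(a_{r,τ(i)}) = δ_{σ(i),τ(i)}`
by orthonormality of the columns. Two permutations agreeing off the first point are equal, so only
the diagonal `σ = τ` survives, leaving `∑_σ |a_{r₁,σ(1)}|² = (n-1)! ∑_k |a_{r₁,k}|²`.
-/

open Matrix

theorem Equiv.Perm.ext_of_forall_ne {α : Type*} [Fintype α] [DecidableEq α]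
    {σ τ : Equiv.Perm α} (a : α) (h : ∀ x, x ≠ a → σ x = τ x) : σ = τ := by
  have hsupp : (τ⁻¹ * σ).support ⊆ {a} := fun x hx => by
    by_contra hxa
    exact Equiv.Perm.mem_support.mp hx (by simp [h x (by simpa using hxa)])
  have hone : τ⁻¹ * σ = 1 := Equiv.Perm.card_support_le_one.mp <|
    (Finset.card_le_card hsupp).trans_eq (Finset.card_singleton a)
  exact (inv_mul_eq_one.mp hone).symm

theorem Equiv.Perm.eq_of_apply_succ_eq {n : ℕ} {σ τ : Equiv.Perm (Fin (n + 1))}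
    (h : ∀ i : Fin n, σ i.succ = τ i.succ) : σ = τ :=
  Equiv.Perm.ext_of_forall_ne 0 fun x hx => by
    obtain ⟨i, rfl⟩ := Fin.exists_succ_eq.mpr hx
    exact h i

theorem Equiv.Perm.sum_apply_zero {M : Type*} [AddCommMonoid M] {n : ℕ} (f : Fin (n + 1) → M) :
    ∑ σ : Equiv.Perm (Fin (n + 1)), f (σ 0) = n.factorial • ∑ k, f k := by
  rw [← Equiv.sum_comp Equiv.Perm.decomposeFin.symm, Fintype.sum_prod_type]
  simp [Finset.smul_sum, Fintype.card_perm]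

theorem Matrix.sum_mul_star_eq_of_conjTranspose_mul_self {m k R : Type*} [Fintype m]
    [DecidableEq k] [CommSemiring R] [StarRing R] {A : Matrix m k R} (hA : Aᴴ * A = 1) (a b : k) :
    ∑ r, A r a * star (A r b) = if a = b then 1 else 0 := by
  have h := congrFun (congrFun hA b) a
  simp only [mul_apply, conjTranspose_apply, one_apply] at h
  simp only [mul_comm (A _ a), h, eq_comm]

theorem Matrix.sum_prod_mul_star_eq_of_conjTranspose_mul_self {ι m k R : Type*} [Fintype ι]
    [DecidableEq ι] [Fintype m] [DecidableEq k] [CommSemiring R] [StarRing R] {A : Matrix m k R}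
    (hA : Aᴴ * A = 1) (f g : ι → k) :
    ∑ t : ι → m, ∏ i, A (t i) (f i) * star (A (t i) (g i)) = if f = g then 1 else 0 := by
  rw [← Fintype.prod_sum fun i r => A r (f i) * star (A r (g i))]
  simp only [sum_mul_star_eq_of_conjTranspose_mul_self hA, Finset.prod_boole, funext_iff]
  simp

theorem perm_mul_conj {n : ℕ} (M : Matrix (Fin n) (Fin n) ℂ) :
    perm M * starRingEnd ℂ (perm M) =
      ∑ σ : Equiv.Perm (Fin n), ∑ τ : Equiv.Perm (Fin n), ∏ i, M i (σ i) * star (M i (τ i)) := by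
  simp only [perm, map_sum, map_prod, Finset.sum_mul_sum, ← Finset.prod_mul_distrib]
  rfl

theorem sum_perm_cons_mul_conj {m n : ℕ} {A : Matrix (Fin m) (Fin (n + 1)) ℂ} (hA : Aᴴ * A = 1)
    (r₁ : Fin m) :
    ∑ t : Fin n → Fin m,
      perm (of fun i j => A ((Fin.cons r₁ t : Fin (n + 1) → Fin m) i) j) *
        starRingEnd ℂ (perm (of fun i j => A ((Fin.cons r₁ t : Fin (n + 1) → Fin m) i) j)) =
      n.factorial • ∑ k, A r₁ k * star (A r₁ k) := by
  have hrows (σ τ : Equiv.Perm (Fin (n + 1))) :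
      ∑ t : Fin n → Fin m, ∏ i : Fin n, A (t i) (σ i.succ) * star (A (t i) (τ i.succ)) =
        if σ = τ then 1 else 0 := by
    rw [sum_prod_mul_star_eq_of_conjTranspose_mul_self hA]
    exact if_congr ⟨fun h => Equiv.Perm.eq_of_apply_succ_eq (congrFun h), fun h => h ▸ rfl⟩
      rfl rfl
  calc _ = ∑ σ : Equiv.Perm (Fin (n + 1)), ∑ τ : Equiv.Perm (Fin (n + 1)),
        A r₁ (σ 0) * star (A r₁ (τ 0)) *
          ∑ t : Fin n → Fin m, ∏ i : Fin n, A (t i) (σ i.succ) * star (A (t i) (τ i.succ)) := by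
        simp only [perm_mul_conj, Fin.prod_univ_succ, of_apply, Fin.cons_zero, Fin.cons_succ,
          Finset.mul_sum]
        rw [Finset.sum_comm]
        exact Finset.sum_congr rfl fun σ _ => Finset.sum_comm
    _ = ∑ σ : Equiv.Perm (Fin (n + 1)), A r₁ (σ 0) * star (A r₁ (σ 0)) := by
        simp only [hrows, mul_ite, mul_one, mul_zero, Finset.sum_ite_eq, Finset.mem_univ, if_true]
    _ = _ := Equiv.Perm.sum_apply_zero fun k => A r₁ k * star (A r₁ k)

/-- First-coordinate marginal of the Boson Sampling pmf: for an
`m × (n+1)` matrix `A` with orthonormal columns and fixed `r₁`,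
`∑_{r₂,…} (1/(n+1)!)|Per A_r|² = (1/(n+1)) ∑_k |a_{r₁,k}|²`. -/
theorem bosonSampling_first_marginal {m n : ℕ}
    (A : Matrix (Fin m) (Fin (n + 1)) ℂ) (hA : Aᴴ * A = 1) (r₁ : Fin m) :
    ∑ t : Fin n → Fin m,
      (1 / ((n + 1).factorial : ℝ)) *
        ‖perm (Matrix.of fun i j => A ((Fin.cons r₁ t : Fin (n + 1) → Fin m) i) j)‖ ^ 2
    = (1 / ((n : ℝ) + 1)) * ∑ k : Fin (n + 1), ‖A r₁ k‖ ^ 2 := by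
  have hsum : ∑ t : Fin n → Fin m,
      ‖perm (of fun i j => A ((Fin.cons r₁ t : Fin (n + 1) → Fin m) i) j)‖ ^ 2 =
        n.factorial * ∑ k, ‖A r₁ k‖ ^ 2 := by
    have := sum_perm_cons_mul_conj hA r₁
    simp only [Complex.mul_conj', Complex.star_def, nsmul_eq_mul] at this
    exact_mod_cast this
  rw [← Finset.mul_sum, hsum, Nat.factorial_succ, Nat.cast_mul]
  field_simp
  push_cast
  ring
end

section
/- Cauchy–Binet formula for permanents in the orthonormal case: if A is an m×n complex matrix with A*A = I_n, then ∑_{z} (1/μ(z)) |Per A_z|^2 = 1, where the sum is over all non-decreasing arrays z ∈ [m]^n, μ(z) = ∏_j s_j! with s_j the multiplicity of j in z, and A_z is the n×n matrix whose k-th row is row z_k of A. -/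
/-!
Expanding both permanents, `∑_z Per(A_z) · conj Per(A_z)` over *all* `z ∈ [m]^n` is
`n! · Per(AᴴA) = n!`. The summand is invariant under `z ↦ z ∘ σ`, and exactly `μ(z)` permutations
`σ` make `z ∘ σ` non-decreasing; counting the pairs `(z, σ)` with `z ∘ σ` non-decreasing in two
ways turns the sum over all `z` into `n!` times the weighted sum over non-decreasing `z`.
-/

open Matrix

/-- `mu z = ∏_j s_j!` where `s_j` is the multiplicity of the value `j` in `z`. -/
def mu {m n : ℕ} (z : Fin n → Fin m) : ℕ :=
  ∏ j : Fin m, (Finset.univ.filter (fun i => z i = j)).card.factorial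

open Finset Equiv Nat

namespace Matrix

variable {m n R S : Type*} [Fintype m] [Fintype n] [DecidableEq n]

theorem permanent_eq_sum_prod_apply [CommSemiring R] (M : Matrix n n R) :
    M.permanent = ∑ σ : Perm n, ∏ i, M i (σ i) := by
  rw [← permanent_transpose]
  rfl

theorem _root_.RingHom.map_permanent [CommSemiring R] [CommSemiring S] (f : R →+* S)
    (M : Matrix n n R) : f M.permanent = (M.map f).permanent := by
  simp [permanent, map_sum, map_prod]

theorem sum_permanent_submatrix_mul_permanent_submatrix [CommSemiring R] (A B : Matrix m n R) :
    ∑ z : n → m, (A.submatrix z id).permanent * (B.submatrix z id).permanent =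
      (Fintype.card n)! * (Aᵀ * B).permanent := by
  have sum_rows (σ τ : Perm n) :
      ∑ z : n → m, ∏ i, A (z i) (σ i) * B (z i) (τ i) = ∏ i, (Aᵀ * B) (σ i) (τ i) := by
    simp only [mul_apply, transpose_apply]
    exact (Fintype.prod_sum fun i j => A j (σ i) * B j (τ i)).symm
  calc ∑ z : n → m, (A.submatrix z id).permanent * (B.submatrix z id).permanent
      = ∑ σ : Perm n, ∑ τ : Perm n, ∑ z : n → m, ∏ i, A (z i) (σ i) * B (z i) (τ i) := by
        simp only [permanent_eq_sum_prod_apply, submatrix_apply, id, sum_mul_sum,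
          ← prod_mul_distrib]
        rw [sum_comm]
        exact sum_congr rfl fun σ _ => sum_comm
    _ = ∑ σ : Perm n, ((Aᵀ * B).submatrix σ id).permanent := by
        simp only [sum_rows, permanent_eq_sum_prod_apply, submatrix_apply, id]
    _ = (Fintype.card n)! * (Aᵀ * B).permanent := by
        simp [permanent_permute_cols, Fintype.card_perm]

theorem sum_norm_permanent_submatrix_sq {𝕜 : Type*} [RCLike 𝕜] (A : Matrix m n 𝕜)
    (hA : Aᴴ * A = 1) :
    ∑ z : n → m, ‖(A.submatrix z id).permanent‖ ^ 2 = (Fintype.card n)! := by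
  apply RCLike.ofReal_injective (K := 𝕜)
  calc ((∑ z : n → m, ‖(A.submatrix z id).permanent‖ ^ 2 : ℝ) : 𝕜)
      = ∑ z : n → m, ((A.map star).submatrix z id).permanent * (A.submatrix z id).permanent := by
        push_cast
        refine sum_congr rfl fun z _ => ?_
        rw [← RCLike.conj_mul, RingHom.map_permanent]
        rfl
    _ = (((Fintype.card n)! : ℝ) : 𝕜) := by
        rw [sum_permanent_submatrix_mul_permanent_submatrix, show (A.map star)ᵀ = Aᴴ from rfl, hA,
          permanent_one, mul_one]
        norm_cast

end Matrix

section Symmetrization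

variable {m n : ℕ}

lemma mu_pos (z : Fin n → Fin m) : 0 < mu z :=
  prod_pos fun _ _ => factorial_pos _

lemma mu_comp_perm (z : Fin n → Fin m) (σ : Perm (Fin n)) : mu (z ∘ σ) = mu z := by
  unfold mu
  refine prod_congr rfl fun j _ => ?_
  congr 1
  exact card_equiv σ (by simp)

lemma card_perm_monotone_comp (z : Fin n → Fin m) :
    #{σ : Perm (Fin n) | Monotone (z ∘ σ)} = mu z := by
  classical
  have sorted : #{σ : Perm (Fin n) | Monotone (z ∘ σ)} = #{σ : Perm (Fin n) | z ∘ ⇑σ = z} := by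
    refine card_equiv (Equiv.mulRight (Tuple.sort z)⁻¹) fun σ => ?_
    simp only [mem_filter, mem_univ, true_and, coe_mulRight, Perm.coe_mul, Perm.inv_def,
      ← Function.comp_assoc, comp_symm_eq, Tuple.comp_sort_eq_comp_iff_monotone]
  rw [sorted, ← Fintype.card_subtype, DomMulAct.stabilizer_card]
  exact prod_congr rfl fun j _ => by rw [Fintype.card_subtype]

theorem sum_monotone_div_mu {K : Type*} [Semifield K] [CharZero K]
    (F : (Fin n → Fin m) → K) (hF : ∀ z (σ : Perm (Fin n)), F (z ∘ σ) = F z) :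
    ∑ w : Fin n → Fin m with Monotone w, F w / mu w = (∑ z, F z) / n ! := by
  classical
  have hmu (z : Fin n → Fin m) : (mu z : K) ≠ 0 := cast_ne_zero.mpr (mu_pos z).ne'
  have count (z : Fin n → Fin m) :
      F z = ∑ σ : Perm (Fin n), if Monotone (z ∘ σ) then F z / mu z else 0 := by
    rw [← sum_filter, sum_const, card_perm_monotone_comp, nsmul_eq_mul, mul_div_cancel₀ _ (hmu z)]
  rw [eq_div_iff (cast_ne_zero.mpr (factorial_ne_zero n)), eq_comm]
  calc ∑ z, F z
      = ∑ σ : Perm (Fin n), ∑ z : Fin n → Fin m,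
          if Monotone (z ∘ σ) then F (z ∘ σ) / mu (z ∘ σ) else 0 := by
        simp only [hF, mu_comp_perm]
        rw [sum_comm]
        exact sum_congr rfl fun z _ => count z
    _ = ∑ _σ : Perm (Fin n), ∑ w : Fin n → Fin m, if Monotone w then F w / mu w else 0 :=
        sum_congr rfl fun σ _ =>
          σ.bijective.comp_right.sum_comp fun w => if Monotone w then F w / mu w else 0
    _ = (∑ w : Fin n → Fin m with Monotone w, F w / mu w) * n ! := by
        simp [← sum_filter, Fintype.card_perm, mul_comm]

end Symmetrization

/-- Cauchy–Binet for permanents (orthonormal case): if `AᴴA = I` then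
`∑_z (1/μ(z)) |Per A_z|² = 1`, summing over non-decreasing `z ∈ [m]^n`. -/
theorem cauchy_binet_permanent {m n : ℕ} (A : Matrix (Fin m) (Fin n) ℂ)
    (hA : Aᴴ * A = 1) :
    ∑ z ∈ Finset.univ.filter
        (fun z : Fin n → Fin m => ∀ i j : Fin n, i ≤ j → z i ≤ z j),
      (1 / (mu z : ℝ)) * ‖perm (Matrix.of fun i j => A (z i) j)‖ ^ 2
    = 1 := by
  have perm_eq (z : Fin n → Fin m) : perm (Matrix.of fun i j => A (z i) j) =
      (A.submatrix z id).permanent := (permanent_eq_sum_prod_apply _).symm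
  have invariant (z : Fin n → Fin m) (σ : Perm (Fin n)) :
      ‖(A.submatrix (z ∘ σ) id).permanent‖ ^ 2 = ‖(A.submatrix z id).permanent‖ ^ 2 := by
    rw [← permanent_permute_cols σ (A.submatrix z id), submatrix_submatrix]
    rfl
  have total := sum_norm_permanent_submatrix_sq A hA
  rw [Fintype.card_fin] at total
  simp only [perm_eq, one_div_mul_eq_div]
  have key := sum_monotone_div_mu (fun z => ‖(A.submatrix z id).permanent‖ ^ 2) invariant
  rw [total, div_self (cast_ne_zero.mpr (factorial_ne_zero n))] at key
  exact key
end

section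
/- Collision probability bound: with s_i the multiplicity of value i in a sample from the Boson Sampling distribution q on multisets of size n from [m] defined by an m×n matrix A with orthonormal columns, the probability P_D that some value appears at least twice satisfies P_D ≤ 2 ∑_{i=1}^{m} ∑_{1 ≤ k < ℓ ≤ n} |a_{i,k}|^2 |a_{i,ℓ}|^2. -/
open Matrix

/-!
Each sorted `z` has `n! / μ(z)` rearrangements `w = z ∘ σ`, all with the same permanent, so the
left-hand side is at most `(1/n!) ∑ |Per A_w|²` over the words `w` with a repeated value. Such a
word has a colliding pair `t < u`, so it suffices to compute, for each pair and each value `i`, the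
sum of `|Per A_w|²` over the words with `w t = w u = i`. Expanding `|Per A_w|²` as a double sum over
permutations `σ, τ` and summing over `w` row by row, orthonormality of the columns of `A` forces
`τ = σ` off `{t, u}`; the two survivors `τ = σ` and `τ = σ * swap t u` each contribute
`|a_{i,σ t}|² |a_{i,σ u}|²`.
-/

namespace CollisionBound

open Finset Equiv ComplexConjugate
open scoped Nat

variable {m n : ℕ}

lemma eq_or_eq_mul_swap_of_forall_ne {α : Type*} [DecidableEq α] {t u : α} {σ τ : Perm α}
    (h : ∀ r, r ≠ t → r ≠ u → τ r = σ r) : τ = σ ∨ τ = σ * swap t u := by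
  have hval : ∀ a, a = t ∨ a = u → τ a = σ t ∨ τ a = σ u := by
    intro a ha
    by_contra! hc
    -- `σ⁻¹ (τ a)` lies outside `{t, u}`, hence is fixed by `σ⁻¹ * τ`, so it equals `a`.
    have hfix : τ (σ.symm (τ a)) = τ a := by
      rw [h _ (fun e => hc.1 (by rw [← e, apply_symm_apply]))
        (fun e => hc.2 (by rw [← e, apply_symm_apply])), apply_symm_apply]
    have := τ.injective hfix
    grind
  have hu := hval u (.inr rfl)
  rcases hval t (.inl rfl) with ht | ht
  · left
    ext r
    grind [τ.injective.eq_iff]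
  · right
    ext r
    grind [Perm.mul_apply, τ.injective.eq_iff, σ.injective.eq_iff]

lemma sum_perm_prod_ite_eq {α R : Type*} [Fintype α] [DecidableEq α] [CommSemiring R] {t u : α}
    (htu : t ≠ u) (σ : Perm α) (x : α → α → R) :
    ∑ τ : Perm α, ∏ r, (if r = t ∨ r = u then x (σ r) (τ r) else if τ r = σ r then 1 else 0)
      = x (σ t) (σ t) * x (σ u) (σ u) + x (σ t) (σ u) * x (σ u) (σ t) := by
  have hswap : σ ≠ σ * swap t u := by
    simpa [eq_comm (a := σ), swap_eq_one_iff] using htu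
  rw [Fintype.sum_eq_add σ (σ * swap t u) hswap]
  · rw [Fintype.prod_eq_mul t u htu, Fintype.prod_eq_mul t u htu]
    · simp [Perm.mul_apply, swap_apply_left, swap_apply_right]
    · intro r hr
      simp [hr.1, hr.2, Perm.mul_apply, swap_apply_of_ne_of_ne hr.1 hr.2]
    · intro r hr
      simp [hr.1, hr.2]
  · rintro τ ⟨hτσ, hτσ'⟩
    obtain ⟨r, hrt, hru, hr⟩ : ∃ r, r ≠ t ∧ r ≠ u ∧ τ r ≠ σ r := by
      by_contra! h
      exact (eq_or_eq_mul_swap_of_forall_ne h).elim hτσ hτσ'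
    exact prod_eq_zero (mem_univ r) (by simp [hrt, hru, hr])

lemma card_filter_comp_perm {α : Type*} [Fintype α] (p : α → Prop) [DecidablePred p]
    (σ : Perm α) : #{t | p (σ t)} = #{t | p t} := by
  simpa only [Fintype.card_subtype] using Fintype.card_congr
    (σ.subtypeEquiv (p := fun t => p (σ t)) (q := p) fun _ => Iff.rfl)

lemma eq_of_monotone_of_comp_perm_eq {α : Type*} [PartialOrder α] {z z' : Fin n → α}
    (hz : Monotone z) (hz' : Monotone z') {σ σ' : Perm (Fin n)} (h : z ∘ σ = z' ∘ σ') :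
    z = z' := by
  have hz'_eq : z' = z ∘ ⇑(σ * σ'⁻¹) := by
    rw [Perm.coe_mul, ← Function.comp_assoc, h, Function.comp_assoc, ← Perm.coe_mul,
      mul_inv_cancel, Perm.coe_one, Function.comp_id]
  have := Tuple.unique_monotone (f := z) (σ := 1) (τ := σ * σ'⁻¹) hz (hz'_eq ▸ hz')
  rwa [Perm.coe_one, Function.comp_id, ← hz'_eq] at this

lemma sum_sum_eq_two_nsmul_sum_lt_add_sum_diag {α M : Type*} [Fintype α] [LinearOrder α]
    [AddCommMonoid M] {f : α → α → M} (hf : ∀ a b, f a b = f b a) :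
    ∑ a, ∑ b, f a b = 2 • ∑ a, ∑ b with a < b, f a b + ∑ a, f a a := by
  have hsplit (a : α) :
      ∑ b, f a b = ∑ b with a < b, f a b + ∑ b with b < a, f a b + f a a := by
    have hdiag : f a a = ∑ b, if b = a then f a b else 0 := by simp
    rw [hdiag, sum_filter, sum_filter, ← sum_add_distrib, ← sum_add_distrib]
    refine sum_congr rfl fun b _ => ?_
    rcases lt_trichotomy a b with h | rfl | h
    · simp [h, h.not_gt, h.ne']
    · simp
    · simp [h, h.not_gt, h.ne]
  have hlower : ∑ a, ∑ b with b < a, f a b = ∑ a, ∑ b with a < b, f a b :=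
    (sum_comm' (by simp)).trans (sum_congr rfl fun a _ => sum_congr rfl fun b _ => hf b a)
  simp only [hsplit, sum_add_distrib, hlower, two_nsmul]

lemma sum_lt_comp_perm {α M : Type*} [Fintype α] [LinearOrder α] [AddCommGroup M]
    [IsAddTorsionFree M] {f : α → α → M} (hf : ∀ a b, f a b = f b a) (σ : Perm α) :
    ∑ a, ∑ b with a < b, f (σ a) (σ b) = ∑ a, ∑ b with a < b, f a b := by
  -- The full double sum and the diagonal are `σ`-invariant, and they determine twice the sum.
  have hσ := sum_sum_eq_two_nsmul_sum_lt_add_sum_diag (f := fun a b => f (σ a) (σ b))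
    fun a b => hf _ _
  have hfull : ∑ a, ∑ b, f (σ a) (σ b) = ∑ a, ∑ b, f a b :=
    (Equiv.sum_comp σ fun a => ∑ b, f a (σ b)).trans
      (sum_congr rfl fun a _ => Equiv.sum_comp σ (f a))
  rw [hfull, Equiv.sum_comp σ fun a => f a a, sum_sum_eq_two_nsmul_sum_lt_add_sum_diag hf] at hσ
  exact nsmul_right_injective two_ne_zero (add_right_cancel hσ).symm

def wordOrbit (z : Fin n → Fin m) : Finset (Fin n → Fin m) :=
  univ.image fun σ : Perm (Fin n) => z ∘ σ

lemma card_wordOrbit_mul_mu (z : Fin n → Fin m) : #(wordOrbit z) * mu z = n ! := by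
  have horbit : Nat.card (MulAction.orbit (Perm (Fin n))ᵈᵐᵃ z) = #(wordOrbit z) := by
    have : MulAction.orbit (Perm (Fin n))ᵈᵐᵃ z = ↑(wordOrbit z) := by
      ext w
      simp only [MulAction.mem_orbit_iff, wordOrbit, coe_image, coe_univ, Set.image_univ,
        Set.mem_range]
      exact (DomMulAct.mk.symm.surjective.exists (p := fun σ : Perm (Fin n) => z ∘ σ = w)).symm
    rw [this, Nat.card_coe_set_eq, Set.ncard_coe_finset]
  have hstab : Nat.card (MulAction.stabilizer (Perm (Fin n))ᵈᵐᵃ z) = mu z := by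
    rw [Nat.card_congr (subtypeEquiv (q := fun g : Perm (Fin n) => z ∘ g = z) DomMulAct.mk.symm
      fun _ => DomMulAct.mem_stabilizer_iff),
      Nat.card_eq_fintype_card, DomMulAct.stabilizer_card, mu]
    simp_rw [Fintype.card_subtype]
  rw [← horbit, ← hstab, ← Nat.card_prod,
    Nat.card_congr (MulAction.orbitProdStabilizerEquivGroup _ z), Nat.card_congr DomMulAct.mk.symm,
    Nat.card_perm, Nat.card_eq_fintype_card, Fintype.card_fin]

lemma pairwiseDisjoint_wordOrbit {S : Finset (Fin n → Fin m)} (hS : ∀ z ∈ S, Monotone z) :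
    (S : Set (Fin n → Fin m)).PairwiseDisjoint wordOrbit := by
  intro z hz z' hz' hne
  refine disjoint_left.2 fun w hw hw' => hne ?_
  obtain ⟨σ, -, rfl⟩ := mem_image.1 hw
  obtain ⟨σ', -, h⟩ := mem_image.1 hw'
  exact eq_of_monotone_of_comp_perm_eq (hS z hz) (hS z' hz') h.symm

lemma wordOrbit_subset_filter {p : (Fin n → Fin m) → Prop} [DecidablePred p]
    (hp : ∀ w (σ : Perm (Fin n)), p (w ∘ σ) ↔ p w) {z : Fin n → Fin m} (hz : p z) :
    wordOrbit z ⊆ univ.filter p := by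
  intro w hw
  obtain ⟨σ, -, rfl⟩ := mem_image.1 hw
  exact mem_filter.2 ⟨mem_univ _, (hp z σ).2 hz⟩

lemma sum_one_div_mu_mul_le {S C : Finset (Fin n → Fin m)} (hS : ∀ z ∈ S, Monotone z)
    (hSC : ∀ z ∈ S, wordOrbit z ⊆ C) {g : (Fin n → Fin m) → ℝ} (hg : 0 ≤ g)
    (hg_perm : ∀ z (σ : Perm (Fin n)), g (z ∘ σ) = g z) :
    ∑ z ∈ S, 1 / (mu z : ℝ) * g z ≤ (∑ w ∈ C, g w) / n ! := by
  have horbit (z : Fin n → Fin m) : 1 / (mu z : ℝ) * g z = (∑ w ∈ wordOrbit z, g w) / n ! := by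
    have hconst : ∀ w ∈ wordOrbit z, g w = g z := by
      intro w hw
      obtain ⟨σ, -, rfl⟩ := mem_image.1 hw
      exact hg_perm z σ
    have hcard : (#(wordOrbit z) : ℝ) * mu z = n ! := by exact_mod_cast card_wordOrbit_mul_mu z
    obtain ⟨hcard_ne, hmu_ne⟩ := mul_ne_zero_iff.1 (hcard ▸ Nat.cast_ne_zero.2 n.factorial_ne_zero)
    rw [sum_congr rfl hconst, sum_const, nsmul_eq_mul, ← hcard]
    field_simp
  calc ∑ z ∈ S, 1 / (mu z : ℝ) * g z = (∑ w ∈ S.biUnion wordOrbit, g w) / n ! := by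
        rw [sum_biUnion (pairwiseDisjoint_wordOrbit hS), sum_div]
        exact sum_congr rfl fun z _ => horbit z
    _ ≤ (∑ w ∈ C, g w) / n ! := by
        refine div_le_div_of_nonneg_right ?_ (Nat.cast_nonneg _)
        exact sum_le_sum_of_subset_of_nonneg (biUnion_subset.2 hSC) fun w _ _ => hg w

lemma perm_eq_permanent (M : Matrix (Fin n) (Fin n) ℂ) : perm M = M.permanent := by
  rw [← permanent_transpose]; rfl

lemma perm_submatrix_comp_perm (A : Matrix (Fin m) (Fin n) ℂ) (w : Fin n → Fin m)
    (σ : Perm (Fin n)) : perm (A.submatrix (w ∘ σ) id) = perm (A.submatrix w id) := by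
  rw [perm_eq_permanent, perm_eq_permanent, ← permanent_permute_cols σ (A.submatrix w id),
    submatrix_submatrix, Function.comp_id]

lemma perm_mul_conj (M : Matrix (Fin n) (Fin n) ℂ) :
    perm M * conj (perm M)
      = ∑ σ : Perm (Fin n), ∑ τ : Perm (Fin n), ∏ r, M r (σ r) * conj (M r (τ r)) := by
  simp only [perm, map_sum, map_prod, sum_mul_sum, prod_mul_distrib]

lemma sum_prod_mul_perm_submatrix_mul_conj (A : Matrix (Fin m) (Fin n) ℂ)
    (d : Fin n → Fin m → ℂ) :
    ∑ w : Fin n → Fin m,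
        (∏ r, d r (w r)) * (perm (A.submatrix w id) * conj (perm (A.submatrix w id)))
      = ∑ σ : Perm (Fin n), ∑ τ : Perm (Fin n),
          ∏ r, ∑ j, d r j * (A j (σ r) * conj (A j (τ r))) := by
  simp only [perm_mul_conj, mul_sum, submatrix_apply, id, ← prod_mul_distrib, Fintype.prod_sum]
  rw [sum_comm]
  exact sum_congr rfl fun σ _ => sum_comm

variable {A : Matrix (Fin m) (Fin n) ℂ}

lemma sum_mul_conj_of_conjTranspose_mul_self_eq_one (hA : Aᴴ * A = 1) (a b : Fin n) :
    ∑ j, A j a * conj (A j b) = if b = a then 1 else 0 := by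
  simpa [mul_apply, one_apply, mul_comm] using congr_fun₂ hA b a

lemma sum_normSq_perm_submatrix_of_apply_eq (hA : Aᴴ * A = 1) {t u : Fin n} (htu : t ≠ u)
    (i : Fin m) :
    ∑ w with w t = i ∧ w u = i, ‖perm (A.submatrix w id)‖ ^ 2
      = 2 * ∑ σ : Perm (Fin n), ‖A i (σ t)‖ ^ 2 * ‖A i (σ u)‖ ^ 2 := by
  let d (r : Fin n) (j : Fin m) : ℂ := if (r = t ∨ r = u) → j = i then 1 else 0
  have hd_prod (w : Fin n → Fin m) : ∏ r, d r (w r) = if w t = i ∧ w u = i then 1 else 0 := by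
    simp only [d, prod_boole, mem_univ, true_implies]
    congr 1
    grind
  have hd_sum (σ τ : Perm (Fin n)) (r : Fin n) :
      ∑ j, d r j * (A j (σ r) * conj (A j (τ r)))
        = if r = t ∨ r = u then A i (σ r) * conj (A i (τ r)) else if τ r = σ r then 1 else 0 := by
    by_cases hr : r = t ∨ r = u
    · simp [d, hr]
    · simpa [d, hr] using sum_mul_conj_of_conjTranspose_mul_self_eq_one hA (σ r) (τ r)
  apply Complex.ofReal_injective
  push_cast
  calc ∑ w with w t = i ∧ w u = i, (‖perm (A.submatrix w id)‖ : ℂ) ^ 2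
      = ∑ w, (∏ r, d r (w r)) * (perm (A.submatrix w id) * conj (perm (A.submatrix w id))) := by
        simp [hd_prod, sum_filter, Complex.mul_conj']
    _ = ∑ σ : Perm (Fin n), ∑ τ : Perm (Fin n),
          ∏ r, ∑ j, d r j * (A j (σ r) * conj (A j (τ r))) :=
        sum_prod_mul_perm_submatrix_mul_conj A d
    _ = 2 * ∑ σ : Perm (Fin n), (‖A i (σ t)‖ : ℂ) ^ 2 * (‖A i (σ u)‖ : ℂ) ^ 2 := by
        simp only [hd_sum, mul_sum]
        refine sum_congr rfl fun σ _ =>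
          (sum_perm_prod_ite_eq htu σ fun a b => A i a * conj (A i b)).trans ?_
        simp only [← Complex.mul_conj']
        ring

-- `∑ i, (s i).choose 2`, where `s i` is the multiplicity of `i` in `w`.
def collisionPairCount (w : Fin n → Fin m) : ℕ :=
  ∑ i, ∑ t, ∑ u with t < u, if w t = i ∧ w u = i then 1 else 0

lemma one_le_collisionPairCount {w : Fin n → Fin m}
    (hw : ∃ v, 2 ≤ #{t | w t = v}) : 1 ≤ collisionPairCount w := by
  obtain ⟨v, hv⟩ := hw
  obtain ⟨a, ha, b, hb, hab⟩ := one_lt_card.1 hv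
  simp only [mem_filter, mem_univ, true_and] at ha hb
  obtain ⟨t, u, htu, ht, hu⟩ : ∃ t u, t < u ∧ w t = v ∧ w u = v := by
    rcases hab.lt_or_gt with h | h
    exacts [⟨a, b, h, ha, hb⟩, ⟨b, a, h, hb, ha⟩]
  simp only [collisionPairCount, Nat.one_le_iff_ne_zero, ne_eq, sum_eq_zero_iff, not_forall]
  exact ⟨v, mem_univ _, t, mem_univ _, u, by simp [htu, ht, hu]⟩

lemma sum_filter_le_sum_collisionPairCount_mul {g : (Fin n → Fin m) → ℝ} (hg : 0 ≤ g) :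
    ∑ w with ∃ v, 2 ≤ #{t | w t = v}, g w ≤ ∑ w, (collisionPairCount w : ℝ) * g w :=
  calc ∑ w with ∃ v, 2 ≤ #{t | w t = v}, g w
      ≤ ∑ w with ∃ v, 2 ≤ #{t | w t = v}, (collisionPairCount w : ℝ) * g w :=
        sum_le_sum fun w hw => le_mul_of_one_le_left (hg w)
          (by exact_mod_cast one_le_collisionPairCount (mem_filter.1 hw).2)
    _ ≤ ∑ w, (collisionPairCount w : ℝ) * g w :=
        sum_le_sum_of_subset_of_nonneg (subset_univ _) fun w _ _ =>
          mul_nonneg (Nat.cast_nonneg _) (hg w)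

lemma sum_collisionPairCount_mul_normSq_perm_submatrix (hA : Aᴴ * A = 1) :
    ∑ w, (collisionPairCount w : ℝ) * ‖perm (A.submatrix w id)‖ ^ 2
      = 2 * n ! * ∑ i, ∑ k, ∑ l with k < l, ‖A i k‖ ^ 2 * ‖A i l‖ ^ 2 := by
  calc ∑ w, (collisionPairCount w : ℝ) * ‖perm (A.submatrix w id)‖ ^ 2
      = ∑ i, ∑ t, ∑ u with t < u, ∑ w with w t = i ∧ w u = i, ‖perm (A.submatrix w id)‖ ^ 2 := by
        simp only [collisionPairCount, Nat.cast_sum, Nat.cast_ite, Nat.cast_one, Nat.cast_zero,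
          sum_mul, boole_mul]
        rw [sum_comm]
        refine sum_congr rfl fun i _ => ?_
        rw [sum_comm]
        refine sum_congr rfl fun t _ => ?_
        rw [sum_comm]
        exact sum_congr rfl fun u _ => (sum_filter _ _).symm
    _ = ∑ i, ∑ t, ∑ u with t < u, 2 * ∑ σ : Perm (Fin n), ‖A i (σ t)‖ ^ 2 * ‖A i (σ u)‖ ^ 2 :=
        sum_congr rfl fun i _ => sum_congr rfl fun t _ => sum_congr rfl fun u hu =>
          sum_normSq_perm_submatrix_of_apply_eq hA (mem_filter.1 hu).2.ne i
    _ = 2 * ∑ i, ∑ t, ∑ u with t < u, ∑ σ : Perm (Fin n), ‖A i (σ t)‖ ^ 2 * ‖A i (σ u)‖ ^ 2 := by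
        simp only [mul_sum]
    _ = 2 * ∑ i, n ! * ∑ k, ∑ l with k < l, ‖A i k‖ ^ 2 * ‖A i l‖ ^ 2 := by
        congr 1
        refine sum_congr rfl fun i _ => ?_
        rw [sum_congr rfl fun t _ => sum_comm, sum_comm,
          sum_congr rfl fun σ _ => sum_lt_comp_perm (f := fun k l => ‖A i k‖ ^ 2 * ‖A i l‖ ^ 2)
            (fun k l => mul_comm _ _) σ]
        simp [Fintype.card_perm]
    _ = 2 * n ! * ∑ i, ∑ k, ∑ l with k < l, ‖A i k‖ ^ 2 * ‖A i l‖ ^ 2 := by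
        rw [← mul_sum, mul_assoc]

end CollisionBound

open Finset CollisionBound
open scoped Nat

/-- Collision probability bound: the probability under the Boson Sampling
distribution `q(z) = (1/μ(z))|Per A_z|²` (on non-decreasing `z ∈ [m]^n`) that
some value appears at least twice is at most
`2 ∑_i ∑_{k<ℓ} |a_{i,k}|² |a_{i,ℓ}|²`. -/
theorem collision_probability_bound {m n : ℕ} (A : Matrix (Fin m) (Fin n) ℂ)
    (hA : Aᴴ * A = 1) :
    ∑ z ∈ Finset.univ.filter
        (fun z : Fin n → Fin m =>
          (∀ i j : Fin n, i ≤ j → z i ≤ z j) ∧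
          ∃ v : Fin m, 2 ≤ (Finset.univ.filter (fun t => z t = v)).card),
      (1 / (mu z : ℝ)) * ‖perm (Matrix.of fun i j => A (z i) j)‖ ^ 2
    ≤ 2 * ∑ i : Fin m, ∑ k : Fin n, ∑ l ∈ Finset.univ.filter (fun l => k < l),
        ‖A i k‖ ^ 2 * ‖A i l‖ ^ 2 := by
  let g (w : Fin n → Fin m) : ℝ := ‖perm (A.submatrix w id)‖ ^ 2
  have hg_nonneg : 0 ≤ g := fun w => sq_nonneg _
  calc _ ≤ (∑ w with ∃ v, 2 ≤ #{t | w t = v}, g w) / n ! :=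
        sum_one_div_mu_mul_le (fun z hz i j hij => (mem_filter.1 hz).2.1 i j hij)
          (fun z hz => wordOrbit_subset_filter
            (fun w σ => by simp [fun v => card_filter_comp_perm (w · = v) σ]) (mem_filter.1 hz).2.2)
          hg_nonneg fun w σ => congrArg (‖·‖ ^ 2) (perm_submatrix_comp_perm A w σ)
    _ ≤ (∑ w, (collisionPairCount w : ℝ) * g w) / n ! :=
        div_le_div_of_nonneg_right (sum_filter_le_sum_collisionPairCount_mul hg_nonneg)
          (Nat.cast_nonneg _)
    _ = _ := by
        rw [sum_collisionPairCount_mul_normSq_perm_submatrix hA]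
        field_simp
end
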